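/- arXiv:1901.05764 — 2 statements merged into one kernel-verified Lean document; each statement's English description precedes it below -/
import Mathlib

section
/- Under the censoring NA model, for any 0 < τ < τ_L, sup_{0 < t < τ} | F_{*n}(t) − F_*(t) | = O((n^{−1} ln n)^{1/2}) almost surely. -/
open MeasureTheory ProbabilityTheory Filter Set

noncomputable section

/-- A family of real random variables is *negatively associated* (NA) if for every pair of
disjoint finite index sets and every pair of coordinatewise nondecreasing (or coordinatewise
nonincreasing) functions for which the covariance exists, the covariance is nonpositive. -/
def NegAssoc {Ω : Type*} [MeasurableSpace Ω] (μ : Measure Ω) {ι : Type*} (Z : ι → Ω → ℝ) : Prop :=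
  ∀ B₁ B₂ : Finset ι, Disjoint B₁ B₂ →
    ∀ (f₁ : (↥B₁ → ℝ) → ℝ) (f₂ : (↥B₂ → ℝ) → ℝ),
      ((Monotone f₁ ∧ Monotone f₂) ∨ (Antitone f₁ ∧ Antitone f₂)) →
      Integrable (fun ω => f₁ fun i => Z i.1 ω) μ →
      Integrable (fun ω => f₂ fun j => Z j.1 ω) μ →
      Integrable (fun ω => (f₁ fun i => Z i.1 ω) * (f₂ fun j => Z j.1 ω)) μ →
      ∫ ω, (f₁ fun i => Z i.1 ω) * (f₂ fun j => Z j.1 ω) ∂μ ≤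
        (∫ ω, (f₁ fun i => Z i.1 ω) ∂μ) * ∫ ω, (f₂ fun j => Z j.1 ω) ∂μ

/-- The censoring NA model: `T` are nonnegative NA survival times with common continuous
distribution function, `Y` are nonnegative NA censoring times with common distribution
function, and the two sequences are independent of each other. -/
structure CensorModel (Ω : Type*) [MeasurableSpace Ω] (μ : Measure Ω) where
  T : ℕ → Ω → ℝ
  Y : ℕ → Ω → ℝ
  measT : ∀ i, Measurable (T i)
  measY : ∀ i, Measurable (Y i)
  nonnegT : ∀ i ω, 0 ≤ T i ω
  nonnegY : ∀ i ω, 0 ≤ Y i ω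
  naT : NegAssoc μ T
  naY : NegAssoc μ Y
  identT : ∀ i, Measure.map (T i) μ = Measure.map (T 0) μ
  identY : ∀ i, Measure.map (Y i) μ = Measure.map (Y 0) μ
  contF : Continuous fun t : ℝ => (μ {ω | T 0 ω ≤ t}).toReal
  indepTY : Indep (⨆ i, MeasurableSpace.comap (T i) inferInstance)
      (⨆ i, MeasurableSpace.comap (Y i) inferInstance) μ

namespace CensorModel

variable {Ω : Type*} [MeasurableSpace Ω] {μ : Measure Ω}

/-- Observed (censored) time `X_i = min (T_i, Y_i)`. -/
def X (M : CensorModel Ω μ) (i : ℕ) (ω : Ω) : ℝ := min (M.T i ω) (M.Y i ω)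

/-- Censoring indicator `δ_i = I(T_i ≤ Y_i)`. -/
def d (M : CensorModel Ω μ) (i : ℕ) (ω : Ω) : ℝ := if M.T i ω ≤ M.Y i ω then 1 else 0

/-- Distribution function `F` of the survival times. -/
def F (M : CensorModel Ω μ) (t : ℝ) : ℝ := (μ {ω | M.T 0 ω ≤ t}).toReal

/-- Distribution function `G` of the censoring times. -/
def G (M : CensorModel Ω μ) (t : ℝ) : ℝ := (μ {ω | M.Y 0 ω ≤ t}).toReal

/-- Distribution function `L` of the observed times. -/
def L (M : CensorModel Ω μ) (t : ℝ) : ℝ := (μ {ω | M.X 0 ω ≤ t}).toReal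

/-- Right endpoint `τ_L = sup {x : L x < 1}` of the support of `L`. -/
def tauL (M : CensorModel Ω μ) : ℝ := sSup {x | M.L x < 1}

/-- Left endpoint `a_F = inf {x : F x > 0}` of the support of `F`. -/
def aF (M : CensorModel Ω μ) : ℝ := sInf {x | 0 < M.F x}

/-- Sub-distribution function `F_*(t) = P(X_1 ≤ t, δ_1 = 1)`. -/
def Fstar (M : CensorModel Ω μ) (t : ℝ) : ℝ :=
  (μ {ω | M.X 0 ω ≤ t ∧ M.T 0 ω ≤ M.Y 0 ω}).toReal

/-- The Lebesgue–Stieltjes measure `dF_*` of the sub-distribution `F_*`. -/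
def mustar (M : CensorModel Ω μ) : Measure ℝ :=
  Measure.map (M.X 0) (μ.restrict {ω | M.T 0 ω ≤ M.Y 0 ω})

/-- Empirical sub-distribution function `F_{*n}`. -/
def Fstarn (M : CensorModel Ω μ) (n : ℕ) (t : ℝ) (ω : Ω) : ℝ :=
  (n : ℝ)⁻¹ * ∑ k ∈ Finset.range n, if M.X k ω ≤ t ∧ M.T k ω ≤ M.Y k ω then (1 : ℝ) else 0

/-- Empirical distribution function `L_n(t) = n⁻¹ Σ_k I(X_k < t)`. -/
def Ln (M : CensorModel Ω μ) (n : ℕ) (t : ℝ) (ω : Ω) : ℝ :=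
  (n : ℝ)⁻¹ * ∑ k ∈ Finset.range n, if M.X k ω < t then (1 : ℝ) else 0

/-- Cumulative hazard function `H(x) = ∫_0^x dF_*(s) / L̄(s)`. -/
def H (M : CensorModel Ω μ) (x : ℝ) : ℝ := ∫ s in Set.Ioc 0 x, (1 - M.L s)⁻¹ ∂M.mustar

/-- `η(x, t, δ) = ∫_0^{x∧t} dF_*(s)/L̄(s)² − I(x ≤ t, δ = 1)/L̄(x)`. -/
def eta (M : CensorModel Ω μ) (x t δ : ℝ) : ℝ :=
  (∫ s in Set.Ioc 0 (min x t), ((1 - M.L s) ^ 2)⁻¹ ∂M.mustar) -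
    (if x ≤ t ∧ δ = 1 then (1 : ℝ) else 0) / (1 - M.L x)

/-- Sorting permutation producing the order statistics of `X_1, …, X_n`. -/
def sortIdx (M : CensorModel Ω μ) (n : ℕ) (ω : Ω) : Fin n → Fin n :=
  ⇑(Tuple.sort fun i : Fin n => M.X i.val ω)

/-- Order statistic `X_(k)` (with `k` zero-based). -/
def Xord (M : CensorModel Ω μ) (n : ℕ) (k : Fin n) (ω : Ω) : ℝ := M.X (M.sortIdx n ω k).val ω

/-- Concomitant `δ_(k)` of the order statistic `X_(k)` (with `k` zero-based). -/
def dord (M : CensorModel Ω μ) (n : ℕ) (k : Fin n) (ω : Ω) : ℝ := M.d (M.sortIdx n ω k).val ω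

/-- Kaplan–Meier estimator: `F̂_n(x) = 1 - ∏_{k : X_(k) ≤ x} (1 - δ_(k)/(n-k+1))`
(here `k` is zero-based, so `n - k + 1` becomes `n - k`). -/
def KM (M : CensorModel Ω μ) (n : ℕ) (x : ℝ) (ω : Ω) : ℝ :=
  1 - ∏ k : Fin n,
    if M.Xord n k ω ≤ x then 1 - M.dord n k ω / ((n : ℝ) - (k.val : ℝ)) else 1

/-- Cumulative hazard estimator `Ĥ_n(x) = Σ_{k : X_(k) ≤ x} δ_(k)/(n-k+1)`. -/
def Hn (M : CensorModel Ω μ) (n : ℕ) (x : ℝ) (ω : Ω) : ℝ :=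
  ∑ k : Fin n,
    if M.Xord n k ω ≤ x then M.dord n k ω / ((n : ℝ) - (k.val : ℝ)) else 0

end CensorModel

/-!
Write `F_{*n}(t) - F_*(t) = n⁻¹ ∑_{k<n} (ζ_k(t) - F_*(t))` with `ζ_k(t) = I(T_k ≤ t, T_k ≤ Y_k)`.
In the coordinates `(-T_k, Y_k)` the indicator `ζ_k(t)` is monotone, and since `-T` and `Y` are
independent NA families, moment generating functions of sums of the `ζ_k(t)` over disjoint index
sets are submultiplicative: condition on `Y` and use NA of `-T`, then use NA of `Y` for the
conditional expectations, which are again monotone. Hoeffding's lemma then makes the centred sum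
sub-Gaussian with variance proxy `n / 4`, exactly as for independent summands, so that
`P(|F_{*n}(t) - F_*(t)| ≥ ε) ≤ 2 exp(-2 n ε²)`.

`F_*` is continuous, as it increases no faster than `F`, so `2 (n + 1)` points bracket every
`t ∈ [0, τ]` up to an `F_*`-increment `1 / n`. For `ε = 2 √(log n / n)` the union bound over these
points is `O(n⁻⁷)`, and Borel–Cantelli together with the monotonicity of `F_{*n}` and `F_*` gives
the rate.
-/

open Real
open scoped Topology NNReal

section NegAssoc

variable {Ω ι : Type*} [MeasurableSpace Ω] {μ : Measure Ω} {Z : ι → Ω → ℝ}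

lemma NegAssoc.neg (hZ : NegAssoc μ Z) : NegAssoc μ (fun i ω => -Z i ω) := by
  intro B₁ B₂ hB f₁ f₂ hmono h₁ h₂ h₁₂
  refine hZ B₁ B₂ hB (fun x => f₁ (-x)) (fun x => f₂ (-x)) ?_ h₁ h₂ h₁₂
  rcases hmono with ⟨hf₁, hf₂⟩ | ⟨hf₁, hf₂⟩
  · exact Or.inr ⟨hf₁.comp_antitone fun _ _ h => neg_le_neg h,
      hf₂.comp_antitone fun _ _ h => neg_le_neg h⟩
  · exact Or.inl ⟨hf₁.comp fun _ _ h => neg_le_neg h, hf₂.comp fun _ _ h => neg_le_neg h⟩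

lemma NegAssoc.integral_mul_le [IsFiniteMeasure μ] (hZ : NegAssoc μ Z)
    (hZm : ∀ i, Measurable (Z i)) {A B : Finset ι} (hAB : Disjoint A B)
    {f g : (ι → ℝ) → ℝ} (hfA : DependsOn f A) (hgB : DependsOn g B)
    (hmono : (Monotone f ∧ Monotone g) ∨ (Antitone f ∧ Antitone g))
    (hf : Measurable f) (hg : Measurable g) {Cf Cg : ℝ}
    (hfC : ∀ x, ‖f x‖ ≤ Cf) (hgC : ∀ x, ‖g x‖ ≤ Cg) :
    ∫ ω, f (fun i => Z i ω) * g (fun i => Z i ω) ∂μ ≤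
      (∫ ω, f (fun i => Z i ω) ∂μ) * ∫ ω, g (fun i => Z i ω) ∂μ := by
  classical
  let extend (C : Finset ι) (y : C → ℝ) (i : ι) : ℝ := if h : i ∈ C then y ⟨i, h⟩ else 0
  have extend_mono (C : Finset ι) : Monotone (extend C) := fun y y' h i => by
    by_cases hi : i ∈ C <;> simp [extend, hi, h ⟨i, _⟩]
  have extend_eq {C : Finset ι} {h : (ι → ℝ) → ℝ} (hC : DependsOn h C) (ω : Ω) :
      h (extend C fun i => Z i.1 ω) = h (fun i => Z i ω) :=
    hC fun i hi => by simp [extend, Finset.mem_coe.mp hi]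
  have hZv : Measurable fun ω i => Z i ω := measurable_pi_lambda _ hZm
  have hfi : Integrable (fun ω => f (fun i => Z i ω)) μ :=
    .of_bound (hf.comp hZv).aestronglyMeasurable Cf (ae_of_all _ fun ω => hfC _)
  have hgi : Integrable (fun ω => g (fun i => Z i ω)) μ :=
    .of_bound (hg.comp hZv).aestronglyMeasurable Cg (ae_of_all _ fun ω => hgC _)
  have hfgi : Integrable (fun ω => f (fun i => Z i ω) * g (fun i => Z i ω)) μ :=
    .of_bound ((hf.comp hZv).mul (hg.comp hZv)).aestronglyMeasurable (Cf * Cg)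
      (ae_of_all _ fun ω => norm_mul_le_of_le (hfC _) (hgC _))
  have key := hZ A B hAB (f ∘ extend A) (g ∘ extend B)
    (hmono.imp (fun h => ⟨h.1.comp (extend_mono A), h.2.comp (extend_mono B)⟩)
      (fun h => ⟨h.1.comp_monotone (extend_mono A), h.2.comp_monotone (extend_mono B)⟩))
  simp only [Function.comp_apply, extend_eq hfA, extend_eq hgB] at key
  exact key hfi hgi hfgi

end NegAssoc

section Independence

variable {Ω α β : Type*} [MeasurableSpace Ω] [MeasurableSpace α] [MeasurableSpace β]
  {μ : Measure Ω} [IsFiniteMeasure μ]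

lemma ProbabilityTheory.IndepFun.integral_comp_eq_integral_integral {X : Ω → α} {Y : Ω → β}
    (hXY : IndepFun X Y μ) (hX : Measurable X) (hY : Measurable Y) {F : α × β → ℝ}
    (hF : Measurable F) {C : ℝ} (hFC : ∀ p, ‖F p‖ ≤ C) :
    ∫ ω, F (X ω, Y ω) ∂μ = ∫ ω, ∫ ω', F (X ω', Y ω) ∂μ ∂μ := by
  have hmap := (indepFun_iff_map_prod_eq_prod_map_map hX.aemeasurable hY.aemeasurable).mp hXY
  have hint : Integrable F ((μ.map X).prod (μ.map Y)) :=
    .of_bound hF.aestronglyMeasurable C (ae_of_all _ hFC)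
  calc ∫ ω, F (X ω, Y ω) ∂μ = ∫ p, F p ∂((μ.map X).prod (μ.map Y)) := by
        rw [← hmap, integral_map (hX.prodMk hY).aemeasurable hF.aestronglyMeasurable]
    _ = ∫ b, ∫ a, F (a, b) ∂(μ.map X) ∂(μ.map Y) := integral_prod_symm F hint
    _ = ∫ ω, ∫ a, F (a, Y ω) ∂(μ.map X) ∂μ :=
        integral_map hY.aemeasurable hF.stronglyMeasurable.integral_prod_left'.aestronglyMeasurable
    _ = ∫ ω, ∫ ω', F (X ω', Y ω) ∂μ ∂μ := by
        congr 1 with ω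
        exact integral_map hX.aemeasurable
          (hF.comp (measurable_id.prodMk measurable_const)).aestronglyMeasurable

end Independence

section TwoFamilies

variable {Ω ι : Type*} [MeasurableSpace Ω] {μ : Measure Ω} {T Y : ι → Ω → ℝ}

/-- When the paths `T` and `Y` are independent, a version of `𝔼[h (T, Y) | Y = b]`. -/
def sectionIntegral (μ : Measure Ω) (T : ι → Ω → ℝ) (h : (ι → ℝ × ℝ) → ℝ) (b : ι → ℝ) : ℝ :=
  ∫ ω, h (fun i => (T i ω, b i)) ∂μ

lemma dependsOn_sectionIntegral {h : (ι → ℝ × ℝ) → ℝ} {A : Set ι} (hA : DependsOn h A) :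
    DependsOn (sectionIntegral μ T h) A := fun b b' hbb' =>
  integral_congr_ae (ae_of_all _ fun ω => hA fun i hi => by simp [hbb' i hi])

lemma measurable_sectionIntegral [SFinite μ] (hTm : ∀ i, Measurable (T i)) {h : (ι → ℝ × ℝ) → ℝ}
    (hm : Measurable h) : Measurable (sectionIntegral μ T h) :=
  (StronglyMeasurable.integral_prod_left'
    (f := fun p : Ω × (ι → ℝ) => h (fun i => (T i p.1, p.2 i)))
    (by fun_prop : Measurable _).stronglyMeasurable).measurable

variable [IsFiniteMeasure μ]

lemma norm_sectionIntegral_le {h : (ι → ℝ × ℝ) → ℝ} {C : ℝ} (hC : ∀ z, ‖h z‖ ≤ C)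
    (b : ι → ℝ) : ‖sectionIntegral μ T h b‖ ≤ C * μ.real univ := by
  simpa [mul_comm, sectionIntegral] using
    norm_integral_le_of_norm_le_const (μ := μ) (ae_of_all _ fun ω => hC _)

lemma monotone_sectionIntegral (hTm : ∀ i, Measurable (T i)) {h : (ι → ℝ × ℝ) → ℝ}
    (hh : Monotone h) (hm : Measurable h) {C : ℝ} (hC : ∀ z, ‖h z‖ ≤ C) :
    Monotone (sectionIntegral μ T h) := by
  have hint (b : ι → ℝ) : Integrable (fun ω => h (fun i => (T i ω, b i))) μ :=
    .of_bound (by fun_prop : Measurable _).aestronglyMeasurable C (ae_of_all _ fun _ => hC _)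
  exact fun b b' hbb' => integral_mono (hint b) (hint b') fun ω => hh fun i => ⟨le_rfl, hbb' i⟩

lemma integral_eq_integral_sectionIntegral (hTm : ∀ i, Measurable (T i))
    (hYm : ∀ i, Measurable (Y i)) (hTY : IndepFun (fun ω i => T i ω) (fun ω i => Y i ω) μ)
    {h : (ι → ℝ × ℝ) → ℝ} (hm : Measurable h) {C : ℝ} (hC : ∀ z, ‖h z‖ ≤ C) :
    ∫ ω, h (fun i => (T i ω, Y i ω)) ∂μ = ∫ ω, sectionIntegral μ T h (fun i => Y i ω) ∂μ :=
  hTY.integral_comp_eq_integral_integral (measurable_pi_lambda _ hTm) (measurable_pi_lambda _ hYm)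
    (F := fun p => h fun i => (p.1 i, p.2 i)) (by fun_prop) fun _ => hC _

/-- Conditionally on `Y`, negative association of `T`; then negative association of `Y` for the
conditional expectations, which inherit monotonicity. -/
theorem NegAssoc.integral_mul_le_of_indepFun_of_monotone (hT : NegAssoc μ T)
    (hY : NegAssoc μ Y) (hTm : ∀ i, Measurable (T i)) (hYm : ∀ i, Measurable (Y i))
    (hTY : IndepFun (fun ω i => T i ω) (fun ω i => Y i ω) μ) {A B : Finset ι}
    (hAB : Disjoint A B) {f g : (ι → ℝ × ℝ) → ℝ} (hfA : DependsOn f A) (hgB : DependsOn g B)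
    (hfmono : Monotone f) (hgmono : Monotone g) (hf : Measurable f) (hg : Measurable g)
    {Cf Cg : ℝ} (hfC : ∀ z, ‖f z‖ ≤ Cf) (hgC : ∀ z, ‖g z‖ ≤ Cg) :
    ∫ ω, f (fun i => (T i ω, Y i ω)) * g (fun i => (T i ω, Y i ω)) ∂μ ≤
      (∫ ω, f (fun i => (T i ω, Y i ω)) ∂μ) * ∫ ω, g (fun i => (T i ω, Y i ω)) ∂μ := by
  set Yv : Ω → ι → ℝ := fun ω i => Y i ω
  have hYv : Measurable Yv := measurable_pi_lambda _ hYm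
  have hfgC (z : ι → ℝ × ℝ) : ‖f z * g z‖ ≤ Cf * Cg := norm_mul_le_of_le (hfC z) (hgC z)
  have inner (b : ι → ℝ) : sectionIntegral μ T (fun z => f z * g z) b ≤
      sectionIntegral μ T f b * sectionIntegral μ T g b := by
    have hsec : Monotone fun a : ι → ℝ => fun i => (a i, b i) := fun a a' h i => ⟨h i, le_rfl⟩
    exact hT.integral_mul_le hTm hAB (fun a a' h => hfA fun i hi => by simp [h i hi])
      (fun a a' h => hgB fun i hi => by simp [h i hi]) (Or.inl ⟨hfmono.comp hsec, hgmono.comp hsec⟩)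
      (by fun_prop) (by fun_prop) (fun _ => hfC _) (fun _ => hgC _)
  have hint_lhs : Integrable (fun ω => sectionIntegral μ T (fun z => f z * g z) (Yv ω)) μ :=
    .of_bound ((measurable_sectionIntegral hTm (hf.mul hg)).comp hYv).aestronglyMeasurable _
      (ae_of_all _ fun ω => norm_sectionIntegral_le hfgC _)
  have hint_rhs :
      Integrable (fun ω => sectionIntegral μ T f (Yv ω) * sectionIntegral μ T g (Yv ω)) μ :=
    .of_bound (((measurable_sectionIntegral hTm hf).mul (measurable_sectionIntegral hTm hg)).comp
      hYv).aestronglyMeasurable _ (ae_of_all _ fun ω =>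
        norm_mul_le_of_le (norm_sectionIntegral_le hfC _) (norm_sectionIntegral_le hgC _))
  calc ∫ ω, f (fun i => (T i ω, Y i ω)) * g (fun i => (T i ω, Y i ω)) ∂μ
      = ∫ ω, sectionIntegral μ T (fun z => f z * g z) (Yv ω) ∂μ :=
        integral_eq_integral_sectionIntegral hTm hYm hTY (hf.mul hg) hfgC
    _ ≤ ∫ ω, sectionIntegral μ T f (Yv ω) * sectionIntegral μ T g (Yv ω) ∂μ :=
        integral_mono hint_lhs hint_rhs fun ω => inner (Yv ω)
    _ ≤ (∫ ω, sectionIntegral μ T f (Yv ω) ∂μ) * ∫ ω, sectionIntegral μ T g (Yv ω) ∂μ :=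
        hY.integral_mul_le hYm hAB (dependsOn_sectionIntegral hfA) (dependsOn_sectionIntegral hgB)
          (Or.inl ⟨monotone_sectionIntegral hTm hfmono hf hfC,
            monotone_sectionIntegral hTm hgmono hg hgC⟩)
          (measurable_sectionIntegral hTm hf) (measurable_sectionIntegral hTm hg)
          (norm_sectionIntegral_le hfC) (norm_sectionIntegral_le hgC)
    _ = _ := by
        rw [integral_eq_integral_sectionIntegral hTm hYm hTY hf hfC,
          integral_eq_integral_sectionIntegral hTm hYm hTY hg hgC]

theorem NegAssoc.integral_mul_le_of_indepFun (hT : NegAssoc μ T)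
    (hY : NegAssoc μ Y) (hTm : ∀ i, Measurable (T i)) (hYm : ∀ i, Measurable (Y i))
    (hTY : IndepFun (fun ω i => T i ω) (fun ω i => Y i ω) μ) {A B : Finset ι}
    (hAB : Disjoint A B) {f g : (ι → ℝ × ℝ) → ℝ} (hfA : DependsOn f A) (hgB : DependsOn g B)
    (hmono : (Monotone f ∧ Monotone g) ∨ (Antitone f ∧ Antitone g))
    (hf : Measurable f) (hg : Measurable g) {Cf Cg : ℝ}
    (hfC : ∀ z, ‖f z‖ ≤ Cf) (hgC : ∀ z, ‖g z‖ ≤ Cg) :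
    ∫ ω, f (fun i => (T i ω, Y i ω)) * g (fun i => (T i ω, Y i ω)) ∂μ ≤
      (∫ ω, f (fun i => (T i ω, Y i ω)) ∂μ) * ∫ ω, g (fun i => (T i ω, Y i ω)) ∂μ := by
  rcases hmono with ⟨hfm, hgm⟩ | ⟨hfm, hgm⟩
  · exact hT.integral_mul_le_of_indepFun_of_monotone hY hTm hYm hTY hAB hfA hgB hfm hgm hf hg
      hfC hgC
  · simpa [integral_neg] using hT.integral_mul_le_of_indepFun_of_monotone hY hTm hYm hTY hAB
      (f := fun z => -f z) (g := fun z => -g z) (fun _ _ h => by simp [hfA h])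
      (fun _ _ h => by simp [hgB h]) hfm.neg hgm.neg hf.neg hg.neg
      (fun z => (norm_neg _).trans_le (hfC z)) (fun z => (norm_neg _).trans_le (hgC z))

theorem NegAssoc.mgf_sum_add_sum_le_of_indepFun (hT : NegAssoc μ T)
    (hY : NegAssoc μ Y) (hTm : ∀ i, Measurable (T i)) (hYm : ∀ i, Measurable (Y i))
    (hTY : IndepFun (fun ω i => T i ω) (fun ω i => Y i ω) μ) {h : ℝ × ℝ → ℝ} (hh : Monotone h)
    (hhm : Measurable h) {C : ℝ} (hhC : ∀ x, ‖h x‖ ≤ C) {A B : Finset ι} (hAB : Disjoint A B)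
    (l : ℝ) :
    mgf (fun ω => ∑ i ∈ A, h (T i ω, Y i ω) + ∑ i ∈ B, h (T i ω, Y i ω)) μ l ≤
      mgf (fun ω => ∑ i ∈ A, h (T i ω, Y i ω)) μ l *
        mgf (fun ω => ∑ i ∈ B, h (T i ω, Y i ω)) μ l := by
  set E : Finset ι → (ι → ℝ × ℝ) → ℝ := fun s z => exp (l * ∑ i ∈ s, h (z i))
  have E_dependsOn (s : Finset ι) : DependsOn (E s) s := fun z z' hzz' => by
    simp only [E, Finset.sum_congr rfl fun i hi => congrArg h (hzz' i hi)]
  have E_measurable (s : Finset ι) : Measurable (E s) := by fun_prop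
  have E_bound (s : Finset ι) (z : ι → ℝ × ℝ) : ‖E s z‖ ≤ exp (|l| * (s.card * C)) := by
    rw [Real.norm_of_nonneg (exp_pos _).le, exp_le_exp]
    refine (le_abs_self _).trans ?_
    rw [abs_mul]
    gcongr
    refine (Finset.abs_sum_le_sum_abs _ _).trans ?_
    simpa using Finset.sum_le_sum fun i _ => hhC (z i)
  have E_mono : (0 ≤ l → ∀ s, Monotone (E s)) ∧ (l ≤ 0 → ∀ s, Antitone (E s)) := by
    have hsum (s : Finset ι) : Monotone fun z : ι → ℝ × ℝ => ∑ i ∈ s, h (z i) :=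
      fun z z' hzz' => Finset.sum_le_sum fun i _ => hh (hzz' i)
    exact ⟨fun hl s z z' hzz' => exp_le_exp.2 (mul_le_mul_of_nonneg_left (hsum s hzz') hl),
      fun hl s z z' hzz' => exp_le_exp.2 (mul_le_mul_of_nonpos_left (hsum s hzz') hl)⟩
  simp only [mgf, mul_add, exp_add]
  exact hT.integral_mul_le_of_indepFun hY hTm hYm hTY hAB (f := E A) (g := E B)
    (E_dependsOn A) (E_dependsOn B)
    ((le_total 0 l).imp (fun hl => ⟨E_mono.1 hl A, E_mono.1 hl B⟩)
      (fun hl => ⟨E_mono.2 hl A, E_mono.2 hl B⟩))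
    (E_measurable A) (E_measurable B) (E_bound A) (E_bound B)

end TwoFamilies

namespace ProbabilityTheory.HasSubgaussianMGF

variable {Ω ι : Type*} [MeasurableSpace Ω] {μ : Measure Ω}

lemma add_of_mgf_add_le {X Y : Ω → ℝ} {cX cY : ℝ≥0} (hX : HasSubgaussianMGF X cX μ)
    (hY : HasSubgaussianMGF Y cY μ)
    (h : ∀ t, mgf (fun ω => X ω + Y ω) μ t ≤ mgf X μ t * mgf Y μ t) :
    HasSubgaussianMGF (fun ω => X ω + Y ω) (cX + cY) μ where
  integrable_exp_mul t := by
    simp_rw [mul_add, exp_add]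
    exact MemLp.integrable_mul (p := 2) (q := 2) (hX.memLp_exp_mul t 2) (hY.memLp_exp_mul t 2)
  mgf_le t := calc
    _ ≤ mgf X μ t * mgf Y μ t := h t
    _ ≤ exp (cX * t ^ 2 / 2) * exp (cY * t ^ 2 / 2) :=
        mul_le_mul (hX.mgf_le t) (hY.mgf_le t) mgf_nonneg (exp_pos _).le
    _ = exp ((cX + cY : ℝ≥0) * t ^ 2 / 2) := by rw [← exp_add]; push_cast; ring_nf

lemma sum_of_mgf_add_le [IsZeroOrProbabilityMeasure μ] {X : ι → Ω → ℝ} {c : ι → ℝ≥0}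
    {s : Finset ι} (h_subG : ∀ i ∈ s, HasSubgaussianMGF (X i) (c i) μ)
    (h_mgf : ∀ A B : Finset ι, Disjoint A B → ∀ t,
      mgf (fun ω => ∑ i ∈ A, X i ω + ∑ i ∈ B, X i ω) μ t ≤
        mgf (fun ω => ∑ i ∈ A, X i ω) μ t * mgf (fun ω => ∑ i ∈ B, X i ω) μ t) :
    HasSubgaussianMGF (fun ω => ∑ i ∈ s, X i ω) (∑ i ∈ s, c i) μ := by
  classical
  induction s using Finset.induction_on with
  | empty => simp
  | insert i s his ih =>
    have hi : HasSubgaussianMGF (fun ω => ∑ j ∈ {i}, X j ω) (c i) μ := by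
      simpa using h_subG i (Finset.mem_insert_self i s)
    have := hi.add_of_mgf_add_le (ih fun j hj => h_subG j (Finset.mem_insert_of_mem hj))
      (h_mgf {i} s (Finset.disjoint_singleton_left.2 his))
    simpa [Finset.sum_insert his] using this

end ProbabilityTheory.HasSubgaussianMGF

lemma exp_neg_two_mul_sq_two_sqrt_log_div {n : ℕ} (hn : 0 < n) :
    exp (-2 * n * (2 * √(log n / n)) ^ 2) = ((n : ℝ) ^ 8)⁻¹ := by
  have hn' : (0 : ℝ) < n := by exact_mod_cast hn
  have hlog : 0 ≤ log n := log_nonneg (by exact_mod_cast hn)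
  rw [mul_pow, sq_sqrt (by positivity), ← exp_log (pow_pos hn' 8), ← exp_neg, log_pow]
  congr 1
  field_simp
  push_cast
  ring

lemma measureReal_biUnion_le_of_tail {Ω α : Type*} [MeasurableSpace Ω] {μ : Measure Ω}
    [IsFiniteMeasure μ] {D : ℕ → α → Ω → ℝ} {S : ℕ → Finset α}
    (hS : ∀ n, (S n).card ≤ 2 * (n + 1))
    (htail : ∀ n, 0 < n → ∀ a ε, 0 ≤ ε → μ.real {ω | ε ≤ |D n a ω|} ≤ 2 * exp (-2 * n * ε ^ 2))
    {n : ℕ} (hn : 0 < n) :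
    μ.real (⋃ a ∈ S n, {ω | 2 * √(log n / n) ≤ |D n a ω|}) ≤ 8 * ((n : ℝ) ^ 2)⁻¹ := by
  have hn' : (1 : ℝ) ≤ n := by exact_mod_cast hn
  calc μ.real (⋃ a ∈ S n, {ω | 2 * √(log n / n) ≤ |D n a ω|})
      ≤ ∑ a ∈ S n, μ.real {ω | 2 * √(log n / n) ≤ |D n a ω|} :=
        measureReal_biUnion_finset_le _ _
    _ ≤ ∑ a ∈ S n, 2 * ((n : ℝ) ^ 8)⁻¹ := by
        gcongr with a
        rw [← exp_neg_two_mul_sq_two_sqrt_log_div hn]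
        exact htail n hn a _ (by positivity)
    _ ≤ 2 * (n + 1) * (2 * ((n : ℝ) ^ 8)⁻¹) := by
        rw [Finset.sum_const, nsmul_eq_mul]
        gcongr
        exact_mod_cast hS n
    _ ≤ 8 * ((n : ℝ) ^ 2)⁻¹ := by
        have h6 : (n : ℝ) ≤ n ^ 6 := le_self_pow₀ hn' (by norm_num)
        rw [show (n : ℝ) ^ 8 = n ^ 6 * n ^ 2 by ring, mul_inv]
        field_simp
        nlinarith

theorem ae_eventually_forall_abs_lt_of_tail {Ω α : Type*} [MeasurableSpace Ω] {μ : Measure Ω}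
    [IsFiniteMeasure μ] {D : ℕ → α → Ω → ℝ} {S : ℕ → Finset α}
    (hS : ∀ n, (S n).card ≤ 2 * (n + 1))
    (htail : ∀ n, 0 < n → ∀ a ε, 0 ≤ ε → μ.real {ω | ε ≤ |D n a ω|} ≤ 2 * exp (-2 * n * ε ^ 2)) :
    ∀ᵐ ω ∂μ, ∀ᶠ n in atTop, ∀ a ∈ S n, |D n a ω| < 2 * √(log n / n) := by
  set E : ℕ → Set Ω := fun n => ⋃ a ∈ S n, {ω | 2 * √(log n / n) ≤ |D n a ω|}
  have hsum : Summable fun n => μ.real (E n) :=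
    ((summable_nat_pow_inv.2 one_lt_two).mul_left 8).of_norm_bounded_eventually_nat
      (eventually_gt_atTop 0 |>.mono fun n hn => by
        rw [Real.norm_of_nonneg measureReal_nonneg]
        exact measureReal_biUnion_le_of_tail hS htail hn)
  have hfin : ∑' n, μ (E n) ≠ ⊤ := by
    have hreal (n : ℕ) : μ (E n) = ENNReal.ofReal (μ.real (E n)) :=
      (ofReal_measureReal (measure_ne_top μ _)).symm
    rw [tsum_congr hreal, ← ENNReal.ofReal_tsum_of_nonneg (fun _ => measureReal_nonneg) hsum]
    exact ENNReal.ofReal_ne_top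
  filter_upwards [ae_eventually_notMem hfin] with ω hω
  filter_upwards [hω] with n hn a ha
  simpa [E] using fun h => hn (mem_biUnion ha h)

lemma exists_finset_bracket {f : ℝ → ℝ} {a b : ℝ} (hf : ContinuousOn f (Icc a b))
    (hf01 : ∀ x ∈ Icc a b, f x ∈ Icc 0 1) (n : ℕ) :
    ∃ S : Finset ℝ, S.card ≤ 2 * (n + 1) ∧ ∀ t ∈ Icc a b, ∃ u ∈ S, ∃ v ∈ S,
      u ≤ t ∧ t ≤ v ∧ n * (f v - f u) ≤ 1 := by
  classical
  set g : ℝ → ℝ := fun s => n * f s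
  have hg : ContinuousOn g (Icc a b) := continuousOn_const.mul hf
  -- `lower j` is the first point of `[a, b]` where `g` reaches level `j`, `upper k` the last point
  -- where `g` is still at most `k`
  set lower : ℕ → ℝ := fun j => sInf (Icc a b ∩ g ⁻¹' Ici (j : ℝ))
  set upper : ℕ → ℝ := fun k => sSup (Icc a b ∩ g ⁻¹' Iic (k : ℝ))
  refine ⟨(Finset.range (n + 1)).image lower ∪ (Finset.range (n + 1)).image upper, ?_, ?_⟩
  · refine (Finset.card_union_le _ _).trans ?_
    have := (Finset.card_image_le (s := Finset.range (n + 1)) (f := lower)).trans_eq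
      (Finset.card_range _)
    have := (Finset.card_image_le (s := Finset.range (n + 1)) (f := upper)).trans_eq
      (Finset.card_range _)
    omega
  intro t ht
  obtain ⟨hft0, hft1⟩ := hf01 t ht
  have hgt0 : 0 ≤ g t := by positivity
  have hgtn : g t ≤ n := mul_le_of_le_one_right n.cast_nonneg hft1
  set j := ⌊g t⌋₊
  set k := ⌈g t⌉₊
  have hj : t ∈ Icc a b ∩ g ⁻¹' Ici (j : ℝ) := ⟨ht, Nat.floor_le hgt0⟩
  have hk : t ∈ Icc a b ∩ g ⁻¹' Iic (k : ℝ) := ⟨ht, Nat.le_ceil (g t)⟩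
  have hu := (hg.preimage_isClosed_of_isClosed isClosed_Icc isClosed_Ici).csInf_mem ⟨t, hj⟩
    ⟨a, fun x hx => hx.1.1⟩
  have hv := (hg.preimage_isClosed_of_isClosed isClosed_Icc isClosed_Iic).csSup_mem ⟨t, hk⟩
    ⟨b, fun x hx => hx.1.2⟩
  refine ⟨lower j, Finset.mem_union_left _ (Finset.mem_image_of_mem _ ?_),
    upper k, Finset.mem_union_right _ (Finset.mem_image_of_mem _ ?_),
    csInf_le ⟨a, fun x hx => hx.1.1⟩ hj, le_csSup ⟨b, fun x hx => hx.1.2⟩ hk, ?_⟩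
  · exact Finset.mem_range_succ_iff.2 (Nat.floor_le_of_le hgtn)
  · exact Finset.mem_range_succ_iff.2 (Nat.ceil_le.2 hgtn)
  · have hkj : (k : ℝ) ≤ j + 1 := by exact_mod_cast Nat.ceil_le_floor_add_one (g t)
    have hlower : (j : ℝ) ≤ n * f (lower j) := hu.2
    have hupper : n * f (upper k) ≤ k := hv.2
    rw [mul_sub]
    linarith

lemma abs_sub_le_of_bracket {F G : ℝ → ℝ} (hF : Monotone F) (hG : Monotone G) {u t v ε δ : ℝ}
    (hut : u ≤ t) (htv : t ≤ v) (hu : |G u - F u| ≤ ε) (hv : |G v - F v| ≤ ε)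
    (hδ : F v - F u ≤ δ) : |G t - F t| ≤ ε + δ := by
  have := hF hut; have := hF htv; have := hG hut; have := hG htv
  rw [abs_le] at *
  constructor <;> linarith

lemma continuous_of_monotone_of_sub_le {F G : ℝ → ℝ} (hG : Monotone G) (hF : Continuous F)
    (h : ∀ s u, s ≤ u → G u - G s ≤ F u - F s) : Continuous G := by
  rw [continuous_iff_continuousAt]
  intro x
  have hbound (u : ℝ) : ‖G u - G x‖ ≤ |F u - F x| := by
    rw [Real.norm_eq_abs]
    rcases le_total u x with hux | hxu
    · have := h u x hux; have := hG hux
      rw [abs_sub_comm, abs_of_nonneg (by linarith), abs_sub_comm, abs_of_nonneg (by linarith)]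
      linarith
    · have := h x u hxu; have := hG hxu
      rw [abs_of_nonneg (by linarith), abs_of_nonneg (by linarith)]
      linarith
  have hF0 : Tendsto (fun u => |F u - F x|) (𝓝 x) (𝓝 0) := by
    simpa using ((hF.tendsto x).sub_const (F x)).abs
  exact tendsto_iff_norm_sub_tendsto_zero.2 (squeeze_zero (fun _ => norm_nonneg _) hbound hF0)

lemma inv_le_sqrt_log_div {n : ℕ} (hn : 3 ≤ n) : (n : ℝ)⁻¹ ≤ √(log n / n) := by
  have hn' : (3 : ℝ) ≤ n := by exact_mod_cast hn
  have hlog : 1 ≤ log n := by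
    rw [le_log_iff_exp_le (by linarith)]
    exact (exp_one_lt_d9.trans (by norm_num)).le.trans hn'
  rw [le_sqrt (by positivity) (div_nonneg (by linarith) (by positivity)), inv_pow, sq, mul_inv,
    div_eq_mul_inv]
  exact mul_le_mul_of_nonneg_right ((inv_le_one_of_one_le₀ (by linarith)).trans hlog)
    (by positivity)

/-- The indicator of `{T ≤ t, T ≤ Y}`, written in the coordinates `x = (-T, Y)` in which it is
monotone. -/
def uncensoredIndicator (t : ℝ) (x : ℝ × ℝ) : ℝ := if -x.1 ≤ t ∧ -x.1 ≤ x.2 then 1 else 0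

lemma monotone_uncensoredIndicator (t : ℝ) : Monotone (uncensoredIndicator t) := by
  intro x y hxy
  unfold uncensoredIndicator
  split_ifs with hx hy <;> norm_num
  exact hy ⟨(neg_le_neg hxy.1).trans hx.1, (neg_le_neg hxy.1).trans (hx.2.trans hxy.2)⟩

@[fun_prop]
lemma measurable_uncensoredIndicator (t : ℝ) : Measurable (uncensoredIndicator t) :=
  Measurable.ite ((measurableSet_le measurable_fst.neg measurable_const).inter
    (measurableSet_le measurable_fst.neg measurable_snd)) measurable_const measurable_const

lemma uncensoredIndicator_mem_Icc (t : ℝ) (x : ℝ × ℝ) : uncensoredIndicator t x ∈ Icc 0 1 := by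
  unfold uncensoredIndicator; split_ifs <;> norm_num

namespace CensorModel

variable {Ω : Type*} [MeasurableSpace Ω] {μ : Measure Ω} (M : CensorModel Ω μ)

lemma indepFun_paths : IndepFun (fun ω i => M.T i ω) (fun ω i => M.Y i ω) μ := by
  have comap_path (Z : ℕ → Ω → ℝ) : MeasurableSpace.comap (fun ω i => Z i ω) MeasurableSpace.pi
      = ⨆ i, MeasurableSpace.comap (Z i) inferInstance := by
    simp only [MeasurableSpace.pi, MeasurableSpace.comap_iSup, MeasurableSpace.comap_comp]
    rfl
  rw [IndepFun_iff_Indep, comap_path, comap_path]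
  exact M.indepTY

lemma map_T_Y_eq [IsFiniteMeasure μ] (k : ℕ) :
    μ.map (fun ω => (M.T k ω, M.Y k ω)) = μ.map (fun ω => (M.T 0 ω, M.Y 0 ω)) := by
  have hind (i : ℕ) : IndepFun (M.T i) (M.Y i) μ :=
    M.indepFun_paths.comp (measurable_pi_apply i) (measurable_pi_apply i)
  rw [(indepFun_iff_map_prod_eq_prod_map_map (M.measT k).aemeasurable
      (M.measY k).aemeasurable).1 (hind k),
    (indepFun_iff_map_prod_eq_prod_map_map (M.measT 0).aemeasurable
      (M.measY 0).aemeasurable).1 (hind 0), M.identT k, M.identY k]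

lemma Fstar_eq_measureReal [IsFiniteMeasure μ] (t : ℝ) (k : ℕ) :
    M.Fstar t = μ.real {ω | M.T k ω ≤ t ∧ M.T k ω ≤ M.Y k ω} := by
  have hS : MeasurableSet {p : ℝ × ℝ | p.1 ≤ t ∧ p.1 ≤ p.2} :=
    (measurableSet_le measurable_fst measurable_const).inter
      (measurableSet_le measurable_fst measurable_snd)
  have hlaw (i : ℕ) : μ.real {ω | M.T i ω ≤ t ∧ M.T i ω ≤ M.Y i ω}
      = (μ.map fun ω => (M.T i ω, M.Y i ω)).real {p | p.1 ≤ t ∧ p.1 ≤ p.2} :=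
    (map_measureReal_apply ((M.measT i).prodMk (M.measY i)) hS).symm
  rw [hlaw, M.map_T_Y_eq, ← hlaw, Fstar, ← measureReal_def]
  congr 1 with ω
  simp only [X, mem_ofPred_eq, min_le_iff]
  constructor
  · rintro ⟨h | h, hTY⟩ <;> exact ⟨by linarith, hTY⟩
  · exact fun h => ⟨Or.inl h.1, h.2⟩

lemma integral_uncensoredIndicator [IsFiniteMeasure μ] (t : ℝ) (k : ℕ) :
    ∫ ω, uncensoredIndicator t (-M.T k ω, M.Y k ω) ∂μ = M.Fstar t := by
  have hmeas : MeasurableSet {ω | M.T k ω ≤ t ∧ M.T k ω ≤ M.Y k ω} :=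
    (measurableSet_le (M.measT k) measurable_const).inter
      (measurableSet_le (M.measT k) (M.measY k))
  rw [M.Fstar_eq_measureReal t k, ← integral_indicator_one hmeas]
  congr 1 with ω
  simp [uncensoredIndicator, Set.indicator_apply]

lemma Fstarn_eq (n : ℕ) (t : ℝ) (ω : Ω) :
    M.Fstarn n t ω =
      (n : ℝ)⁻¹ * ∑ k ∈ Finset.range n, uncensoredIndicator t (-M.T k ω, M.Y k ω) := by
  unfold Fstarn uncensoredIndicator X
  congr 1
  refine Finset.sum_congr rfl fun k _ => if_congr ?_ rfl rfl
  simp only [neg_neg, min_le_iff]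
  constructor
  · rintro ⟨h | h, hTY⟩ <;> exact ⟨by linarith, hTY⟩
  · exact fun h => ⟨Or.inl h.1, h.2⟩

lemma Fstar_mono [IsFiniteMeasure μ] : Monotone M.Fstar := fun s u hsu => by
  rw [M.Fstar_eq_measureReal s 0, M.Fstar_eq_measureReal u 0]
  exact measureReal_mono fun ω h => ⟨h.1.trans hsu, h.2⟩

lemma Fstar_mem_Icc [IsProbabilityMeasure μ] (t : ℝ) : M.Fstar t ∈ Icc 0 1 :=
  ⟨measureReal_nonneg, measureReal_le_one⟩

lemma Fstar_sub_le_F_sub [IsFiniteMeasure μ] {s u : ℝ} (hsu : s ≤ u) :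
    M.Fstar u - M.Fstar s ≤ M.F u - M.F s := by
  have hT (r : ℝ) : MeasurableSet {ω | M.T 0 ω ≤ r} := measurableSet_le (M.measT 0) measurable_const
  have hTY : MeasurableSet {ω | M.T 0 ω ≤ M.Y 0 ω} := measurableSet_le (M.measT 0) (M.measY 0)
  have hA : {ω | M.T 0 ω ≤ s ∧ M.T 0 ω ≤ M.Y 0 ω} ⊆ {ω | M.T 0 ω ≤ u ∧ M.T 0 ω ≤ M.Y 0 ω} :=
    fun ω h => ⟨h.1.trans hsu, h.2⟩
  have hB : {ω | M.T 0 ω ≤ s} ⊆ {ω | M.T 0 ω ≤ u} := fun ω h => le_trans h hsu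
  rw [M.Fstar_eq_measureReal u 0, M.Fstar_eq_measureReal s 0, F, F, ← measureReal_def,
    ← measureReal_def, ← measureReal_sdiff hA ((hT s).inter hTY), ← measureReal_sdiff hB (hT s)]
  exact measureReal_mono fun ω h => ⟨h.1.1, fun hs => h.2 ⟨hs, h.1.2⟩⟩

lemma continuous_Fstar [IsFiniteMeasure μ] : Continuous M.Fstar :=
  continuous_of_monotone_of_sub_le M.Fstar_mono M.contF fun _ _ => M.Fstar_sub_le_F_sub

lemma Fstarn_mono (n : ℕ) (ω : Ω) : Monotone fun t => M.Fstarn n t ω := fun s u hsu => by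
  refine mul_le_mul_of_nonneg_left (Finset.sum_le_sum fun _ _ => ?_) (by positivity)
  split_ifs with hs hu <;> norm_num
  exact hu ⟨hs.1.trans hsu, hs.2⟩

variable [IsProbabilityMeasure μ]

lemma hasSubgaussianMGF_sum_uncensoredIndicator_sub (t : ℝ) (n : ℕ) :
    HasSubgaussianMGF
      (fun ω => ∑ k ∈ Finset.range n, (uncensoredIndicator t (-M.T k ω, M.Y k ω) - M.Fstar t))
      (n / 4) μ := by
  have hc : ∑ _k ∈ Finset.range n, (‖(1 : ℝ) - 0‖₊ / 2) ^ 2 = (n / 4 : ℝ≥0) := by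
    simp only [sub_zero, nnnorm_one, one_div, inv_pow, Finset.sum_const, Finset.card_range,
      nsmul_eq_mul]
    ring
  rw [← hc]
  refine HasSubgaussianMGF.sum_of_mgf_add_le (fun k _ => ?_) fun A B hAB l => ?_
  · have := hasSubgaussianMGF_of_mem_Icc (μ := μ)
      (X := fun ω => uncensoredIndicator t (-M.T k ω, M.Y k ω))
      (((measurable_uncensoredIndicator t).comp ((M.measT k).neg.prodMk (M.measY k))).aemeasurable)
      (ae_of_all _ fun ω => uncensoredIndicator_mem_Icc t _)
    rwa [M.integral_uncensoredIndicator] at this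
  · have hbound (x : ℝ × ℝ) : ‖uncensoredIndicator t x - M.Fstar t‖ ≤ 1 := by
      obtain ⟨h0, h1⟩ := uncensoredIndicator_mem_Icc t x
      obtain ⟨h0', h1'⟩ := M.Fstar_mem_Icc t
      rw [Real.norm_eq_abs, abs_sub_le_iff]
      constructor <;> linarith
    exact M.naT.neg.mgf_sum_add_sum_le_of_indepFun M.naY (fun i => (M.measT i).neg) M.measY
      (M.indepFun_paths.comp (measurable_pi_lambda _ fun i => (measurable_pi_apply i).neg)
        measurable_id)
      (fun x y hxy => sub_le_sub_right (monotone_uncensoredIndicator t hxy) _)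
      ((measurable_uncensoredIndicator t).sub_const _) hbound hAB l

lemma measureReal_abs_Fstarn_sub_Fstar_ge_le (t : ℝ) {n : ℕ} (hn : 0 < n) {ε : ℝ}
    (hε : 0 ≤ ε) :
    μ.real {ω | ε ≤ |M.Fstarn n t ω - M.Fstar t|} ≤ 2 * exp (-2 * n * ε ^ 2) := by
  have hn' : (0 : ℝ) < n := by exact_mod_cast hn
  set S : Ω → ℝ :=
    fun ω => ∑ k ∈ Finset.range n, (uncensoredIndicator t (-M.T k ω, M.Y k ω) - M.Fstar t)
  have hS := M.hasSubgaussianMGF_sum_uncensoredIndicator_sub t n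
  have hexp : exp (-(n * ε) ^ 2 / (2 * ((n / 4 : ℝ≥0) : ℝ))) = exp (-2 * n * ε ^ 2) := by
    congr 1
    push_cast
    field_simp
    ring
  have hsub : {ω | ε ≤ |M.Fstarn n t ω - M.Fstar t|} ⊆
      {ω | n * ε ≤ S ω} ∪ {ω | n * ε ≤ (-S) ω} := by
    intro ω hω
    have hdiff : M.Fstarn n t ω - M.Fstar t = S ω / n := by
      simp only [Fstarn_eq, S, Finset.sum_sub_distrib, Finset.sum_const, Finset.card_range,
        nsmul_eq_mul]
      field_simp
    rw [mem_ofPred_eq, hdiff, abs_div, Nat.abs_cast, le_div_iff₀ hn', mul_comm] at hω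
    exact (le_abs'.1 hω).symm.imp id le_neg_of_le_neg
  calc μ.real {ω | ε ≤ |M.Fstarn n t ω - M.Fstar t|}
      ≤ μ.real {ω | n * ε ≤ S ω} + μ.real {ω | n * ε ≤ (-S) ω} :=
        (measureReal_mono hsub).trans (measureReal_union_le _ _)
    _ ≤ 2 * exp (-2 * n * ε ^ 2) := by
        have h₁ := hS.measure_ge_le (by positivity : 0 ≤ (n : ℝ) * ε)
        have h₂ := hS.neg.measure_ge_le (by positivity : 0 ≤ (n : ℝ) * ε)
        rw [hexp] at h₁ h₂
        linarith

end CensorModel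

theorem empirical_subdistribution_strong_rate_general
    {Ω : Type*} [MeasurableSpace Ω] {μ : Measure Ω} [IsProbabilityMeasure μ]
    (M : CensorModel Ω μ) (τ : ℝ) :
    ∀ᵐ ω ∂μ, ∃ C : ℝ, ∀ᶠ n : ℕ in atTop, ∀ t ∈ Set.Ioo (0 : ℝ) τ,
      |M.Fstarn n t ω - M.Fstar t| ≤ C * Real.sqrt (Real.log n / n) := by
  choose S hS_card hS_bracket using exists_finset_bracket (a := 0) (b := τ)
    M.continuous_Fstar.continuousOn fun t _ => M.Fstar_mem_Icc t
  filter_upwards [ae_eventually_forall_abs_lt_of_tail hS_card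
    fun n hn t _ hε => M.measureReal_abs_Fstarn_sub_Fstar_ge_le t hn hε] with ω hω
  refine ⟨3, ?_⟩
  filter_upwards [hω, eventually_ge_atTop 3] with n hgrid hn t ht
  obtain ⟨u, hu, v, hv, hut, htv, hstep⟩ := hS_bracket n t (Ioo_subset_Icc_self ht)
  have hn' : (0 : ℝ) < n := by exact_mod_cast (by omega : 0 < n)
  calc |M.Fstarn n t ω - M.Fstar t|
      ≤ 2 * √(log n / n) + (n : ℝ)⁻¹ :=
        abs_sub_le_of_bracket M.Fstar_mono (M.Fstarn_mono n ω) hut htv (hgrid u hu).le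
          (hgrid v hv).le (by rwa [← one_div, le_div_iff₀ hn', mul_comm])
    _ ≤ 3 * √(log n / n) := by linarith [inv_le_sqrt_log_div hn]

/-- Under the censoring NA model, for any `0 < τ < τ_L`,
`sup_{0 < t < τ} |F_{*n}(t) − F_*(t)| = O((n⁻¹ ln n)^{1/2})` almost surely. -/
theorem empirical_subdistribution_strong_rate
    {Ω : Type*} [MeasurableSpace Ω] {μ : Measure Ω} [IsProbabilityMeasure μ]
    (M : CensorModel Ω μ) (τ : ℝ) (hτ0 : 0 < τ) (hτL : τ < M.tauL) :
    ∀ᵐ ω ∂μ, ∃ C : ℝ, ∀ᶠ n : ℕ in atTop, ∀ t ∈ Set.Ioo (0 : ℝ) τ,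
      |M.Fstarn n t ω - M.Fstar t| ≤ C * Real.sqrt (Real.log n / n) :=
  empirical_subdistribution_strong_rate_general M τ
end
end

section
/- Let T and Y be independent nonnegative random variables where T has a continuous distribution function F with density f and Y has distribution function G. Set X = min(T, Y), let L be the distribution function of X, L̄ = 1−L, and F_*(t) = P(T ≤ t, T ≤ Y). Then for every x with F(x) < 1 and G(x) < 1, ∫_0^x dF_*(s)/L̄(s) = ∫_0^x f(s)/(1 − F(s)) ds, i.e. the cumulative hazard function H(x) = ∫_0^x h(s) ds with hazard h = f/(1−F) admits the representation H(x) = ∫_0^x dF_*(s)/L̄(s). -/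
/-!
On `{T ≤ Y}` the minimum is `T`, so by independence the sub-distribution `F_*` has density
`f(t) · P(Y ≥ t)`, while `1 − L(s) = P(T > s) · P(Y > s)`. The survival functions `P(Y ≥ s)` and
`P(Y > s)` differ only at the countably many atoms of `Y`, so the two integrands agree
Lebesgue-a.e. on `(0, x]`, where `P(Y > s) > 0`.
-/

open MeasureTheory ProbabilityTheory Filter Set

namespace ProbabilityTheory

variable {Ω : Type*} [MeasurableSpace Ω] {μ : Measure Ω} {X Y : Ω → ℝ}

theorem IndepFun.map_restrict_le_eq_withDensity [IsFiniteMeasure μ]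
    (hX : Measurable X) (hY : Measurable Y) (hXY : IndepFun X Y μ) :
    (μ.restrict {ω | X ω ≤ Y ω}).map X = (μ.map X).withDensity fun t => μ {ω | t ≤ Y ω} := by
  ext A hA
  set B : Set (ℝ × ℝ) := {p | p.1 ∈ A ∧ p.1 ≤ p.2}
  have hB : MeasurableSet B :=
    (measurable_fst hA).inter (measurableSet_le measurable_fst measurable_snd)
  have hpre : X ⁻¹' A ∩ {ω | X ω ≤ Y ω} = (fun ω => (X ω, Y ω)) ⁻¹' B := rfl
  rw [Measure.map_apply hX hA, Measure.restrict_apply' (measurableSet_le hX hY),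
    withDensity_apply _ hA, hpre, ← Measure.map_apply (hX.prodMk hY) hB,
    (indepFun_iff_map_prod_eq_prod_map_map hX.aemeasurable hY.aemeasurable).mp hXY,
    Measure.prod_apply hB, ← lintegral_indicator hA]
  refine lintegral_congr fun t => ?_
  by_cases ht : t ∈ A
  · have hsection : Prod.mk t ⁻¹' B = Ici t := by ext; simp [B, ht]
    rw [hsection, indicator_of_mem ht, Measure.map_apply hY measurableSet_Ici]
    rfl
  · simp [B, ht]

theorem IndepFun.measure_lt_min (hXY : IndepFun X Y μ) (s : ℝ) :
    μ {ω | s < min (X ω) (Y ω)} = μ {ω | s < X ω} * μ {ω | s < Y ω} := by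
  have hset : {ω | s < min (X ω) (Y ω)} = X ⁻¹' Ioi s ∩ Y ⁻¹' Ioi s := by ext; simp
  rw [hset]
  exact hXY.measure_inter_preimage_eq_mul _ _ measurableSet_Ioi measurableSet_Ioi

theorem one_sub_toReal_measure_le [IsProbabilityMeasure μ] (hX : Measurable X) (s : ℝ) :
    1 - (μ {ω | X ω ≤ s}).toReal = (μ {ω | s < X ω}).toReal := by
  have hcompl : {ω | s < X ω} = {ω | X ω ≤ s}ᶜ := by ext; simp
  rw [hcompl, ← measureReal_def, ← measureReal_def,
    probReal_compl_eq_one_sub (measurableSet_le hX measurable_const)]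

theorem ae_measure_le_eq_measure_lt (ν : Measure ℝ) [NullSingletonClass ν] (X : Ω → ℝ) :
    ∀ᵐ s ∂ν, μ {ω | s ≤ X ω} = μ {ω | s < X ω} := by
  simpa using (countable_meas_le_ne_meas_lt μ X).ae_notMem ν

theorem toReal_measure_lt_pos [IsProbabilityMeasure μ] (hX : Measurable X) {s x : ℝ}
    (hsx : s ≤ x) (hx : (μ {ω | X ω ≤ x}).toReal < 1) : 0 < (μ {ω | s < X ω}).toReal := by
  have hpos : 0 < (μ {ω | x < X ω}).toReal := by
    rw [← one_sub_toReal_measure_le hX]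
    linarith
  exact hpos.trans_le <|
    ENNReal.toReal_mono (measure_ne_top _ _) (measure_mono fun ω h => hsx.trans_lt h)

end ProbabilityTheory

theorem cumulative_hazard_representation_general
    {Ω : Type*} [MeasurableSpace Ω] {μ : Measure Ω} [IsProbabilityMeasure μ]
    (T Y : Ω → ℝ) (hT : Measurable T) (hY : Measurable Y)
    (hInd : IndepFun T Y μ)
    (f : ℝ → ℝ) (hf : Measurable f) (hf0 : ∀ s, 0 ≤ f s)
    (hdens : Measure.map T μ = volume.withDensity fun s => ENNReal.ofReal (f s)) :
    ∀ x : ℝ, (μ {ω | T ω ≤ x}).toReal < 1 → (μ {ω | Y ω ≤ x}).toReal < 1 →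
      (∫ s in Set.Ioc (0 : ℝ) x, (1 - (μ {ω | min (T ω) (Y ω) ≤ s}).toReal)⁻¹
          ∂(Measure.map (fun ω => min (T ω) (Y ω)) (μ.restrict {ω | T ω ≤ Y ω}))) =
        ∫ s in Set.Ioc (0 : ℝ) x, f s / (1 - (μ {ω | T ω ≤ s}).toReal) := by
  intro x _ hGx
  have hYsurv : Measurable fun t => μ {ω | t ≤ Y ω} :=
    Antitone.measurable fun s t hst => measure_mono fun ω h => hst.trans h
  have hρm : Measurable fun t => ENNReal.ofReal (f t) * μ {ω | t ≤ Y ω} :=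
    hf.ennreal_ofReal.mul hYsurv
  have hsub : (μ.restrict {ω | T ω ≤ Y ω}).map (fun ω => min (T ω) (Y ω))
      = volume.withDensity fun t => ENNReal.ofReal (f t) * μ {ω | t ≤ Y ω} := by
    rw [Measure.map_congr (ae_restrict_of_forall_mem (measurableSet_le hT hY)
        fun ω h => min_eq_left h), hInd.map_restrict_le_eq_withDensity hT hY, hdens,
      ← withDensity_mul _ hf.ennreal_ofReal hYsurv]
    rfl
  rw [hsub, restrict_withDensity measurableSet_Ioc,
    integral_withDensity_eq_integral_toReal_smul hρm (ae_of_all _ fun t => ENNReal.mul_lt_top ENNReal.ofReal_lt_top (measure_lt_top _ _))]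
  refine setIntegral_congr_ae measurableSet_Ioc ?_
  filter_upwards [ae_measure_le_eq_measure_lt volume Y] with s hatom hs
  rw [hatom, one_sub_toReal_measure_le (hT.min hY), hInd.measure_lt_min,
    one_sub_toReal_measure_le hT, smul_eq_mul, ENNReal.toReal_mul, ENNReal.toReal_mul,
    ENNReal.toReal_ofReal (hf0 s), ← div_eq_mul_inv,
    mul_div_mul_right _ _ (toReal_measure_lt_pos hY hs.2 hGx).ne']

/-- Let `T` and `Y` be independent nonnegative random variables, where `T`
has a (continuous) distribution function with density `f` and `Y` has distribution function
`G`.  With `X = min (T, Y)`, `L` the distribution function of `X`, `L̄ = 1 − L` and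
`F_*(t) = P(T ≤ t, T ≤ Y)`, for every `x` with `F(x) < 1` and `G(x) < 1` the cumulative
hazard function admits the representation
`H(x) = ∫_0^x dF_*(s)/L̄(s) = ∫_0^x f(s)/(1 − F(s)) ds`. -/
theorem cumulative_hazard_representation
    {Ω : Type*} [MeasurableSpace Ω] {μ : Measure Ω} [IsProbabilityMeasure μ]
    (T Y : Ω → ℝ) (hT : Measurable T) (hY : Measurable Y)
    (hT0 : ∀ ω, 0 ≤ T ω) (hY0 : ∀ ω, 0 ≤ Y ω)
    (hInd : IndepFun T Y μ)
    (f : ℝ → ℝ) (hf : Measurable f) (hf0 : ∀ s, 0 ≤ f s)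
    (hdens : Measure.map T μ = volume.withDensity fun s => ENNReal.ofReal (f s)) :
    ∀ x : ℝ, (μ {ω | T ω ≤ x}).toReal < 1 → (μ {ω | Y ω ≤ x}).toReal < 1 →
      (∫ s in Set.Ioc (0 : ℝ) x, (1 - (μ {ω | min (T ω) (Y ω) ≤ s}).toReal)⁻¹
          ∂(Measure.map (fun ω => min (T ω) (Y ω)) (μ.restrict {ω | T ω ≤ Y ω}))) =
        ∫ s in Set.Ioc (0 : ℝ) x, f s / (1 - (μ {ω | T ω ≤ s}).toReal) :=
  cumulative_hazard_representation_general T Y hT hY hInd f hf hf0 hdens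
end
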